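/- arXiv:2303.02027 — 4 statements merged into one kernel-verified Lean document; each statement's English description precedes it below -/
import Mathlib

section
/- Let M = {S_1,...,S_n} be a collection of n i.i.d. random variables uniformly distributed on (0,1), let μ ∈ (0,1/2), and let r = ⌊n^{1-μ}⌋. Then the probability that for every i ∈ {1,...,r} the number of elements of M that are at most i/r is at least (n/2)·(i/r) is bounded below by 1 - n^{1-μ}·exp(-n^μ/8). -/
/-!
For a fixed level `p = i/r`, the count `#{j | S j ≤ p}` is a sum of `n` independent Bernoulli(`p`)
indicators, so the multiplicative Chernoff bound (exponential Markov at `t = -log 2`, together with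
`1 - p/2 ≤ exp (-p/2)` and `log 2 < 3/4`) makes it fall below half its mean `n p` with probability
at most `exp (-n p/8)`. Since `p ≥ 1/r ≥ n^{μ-1}`, this is at most `exp (-n^μ/8)`, and a union
bound over the `r ≤ n^{1-μ}` levels gives the claim.
-/

open MeasureTheory ProbabilityTheory Real Finset

theorem rpow_le_mul_div_of_le_rpow {x μ : ℝ} (hx : 0 ≤ x) {i r : ℕ} (hi : 1 ≤ i)
    (hr0 : 0 < r) (hr : (r : ℝ) ≤ x ^ (1 - μ)) : x ^ μ ≤ x * (i / r) := by
  rw [mul_div_assoc', le_div_iff₀ (by exact_mod_cast hr0)]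
  calc x ^ μ * r ≤ x ^ μ * x ^ (1 - μ) := mul_le_mul_of_nonneg_left hr (by positivity)
    _ = x := by rw [← rpow_add' hx (by norm_num), add_sub_cancel, rpow_one]
    _ ≤ x * i := le_mul_of_one_le_right hx (by exact_mod_cast hi)

theorem measureReal_preimage_Iic_of_map_eq_uniform {Ω : Type*} [MeasurableSpace Ω]
    {P : Measure Ω} {S : Ω → ℝ} (hS : Measurable S)
    (hunif : P.map S = volume.restrict (Set.Ioo (0 : ℝ) 1)) {p : ℝ} (hp0 : 0 ≤ p)
    (hp1 : p ≤ 1) : P.real (S ⁻¹' Set.Iic p) = p := by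
  rw [← map_measureReal_apply hS measurableSet_Iic, hunif,
    Measure.restrict_congr_set Ioo_ae_eq_Ioc, measureReal_restrict_apply measurableSet_Iic,
    Set.inter_comm, Set.Ioc_inter_Iic, min_eq_right hp1, volume_real_Ioc_of_le hp0, sub_zero]

section

variable {Ω : Type*} [MeasurableSpace Ω] {P : Measure Ω} [IsProbabilityMeasure P]

theorem one_sub_sum_measure_le_measure_forall {ι : Type*} (s : Finset ι)
    (Q : ι → Ω → Prop) :
    1 - ∑ i ∈ s, P {ω | ¬ Q i ω} ≤ P {ω | ∀ i ∈ s, Q i ω} := by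
  have hcompl : {ω | ∀ i ∈ s, Q i ω}ᶜ ⊆ ⋃ i ∈ s, {ω | ¬ Q i ω} := by
    intro ω hω
    simpa using hω
  calc 1 - ∑ i ∈ s, P {ω | ¬ Q i ω} ≤ 1 - P {ω | ∀ i ∈ s, Q i ω}ᶜ :=
        tsub_le_tsub_left ((measure_mono hcompl).trans (measure_biUnion_finset_le s _)) 1
    _ ≤ P {ω | ∀ i ∈ s, Q i ω} := by
        rw [tsub_le_iff_right, ← measure_univ (μ := P)]
        exact measure_univ_le_add_compl _

theorem mgf_indicator_one {A : Set Ω} (hA : MeasurableSet A) (t : ℝ) :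
    mgf (A.indicator 1) P t = 1 + P.real A * (exp t - 1) := by
  have h : (fun ω => exp (t * A.indicator 1 ω)) =
      fun ω => 1 + A.indicator (fun _ => exp t - 1) ω := by
    funext ω
    by_cases hω : ω ∈ A <;> simp [hω]
  rw [mgf, h, integral_add (integrable_const 1) ((integrable_const _).indicator hA),
    integral_indicator_const _ hA]
  simp

theorem measureReal_sum_indicator_le_half_le {ι : Type*} [Fintype ι] {A : ι → Set Ω}
    (hA : ∀ i, MeasurableSet (A i))
    (hind : iIndepFun (fun i => (A i).indicator (1 : Ω → ℝ)) P) :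
    P.real {ω | ∑ i, (A i).indicator 1 ω ≤ (∑ i, P.real (A i)) / 2} ≤
      exp (-(∑ i, P.real (A i)) / 8) := by
  set m := ∑ i, P.real (A i)
  set Y := ∑ i, (A i).indicator (1 : Ω → ℝ) with hY
  have hmeas : ∀ i, Measurable ((A i).indicator (1 : Ω → ℝ)) :=
    fun i => measurable_const.indicator (hA i)
  have ht : -log 2 ≤ 0 := neg_nonpos.2 (log_nonneg one_le_two)
  have hint : Integrable (fun ω => exp (-log 2 * Y ω)) P := by
    refine Integrable.of_bound (by fun_prop) 1 (ae_of_all _ fun ω => ?_)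
    have hY0 : 0 ≤ Y ω := by
      simp only [hY, Finset.sum_apply]
      exact Finset.sum_nonneg fun i _ => Set.indicator_nonneg (fun _ _ => zero_le_one) ω
    rw [norm_of_nonneg (exp_pos _).le, exp_le_one_iff]
    exact mul_nonpos_of_nonpos_of_nonneg ht hY0
  have hmgf : mgf Y P (-log 2) ≤ exp (-(m / 2)) := by
    rw [hY, hind.mgf_sum hmeas, Finset.sum_div, ← Finset.sum_neg_distrib, exp_sum]
    refine Finset.prod_le_prod (fun i _ => ?_) fun i _ => ?_
    · rw [mgf_indicator_one (hA i)]
      have := measureReal_le_one (μ := P) (s := A i)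
      rw [exp_neg, exp_log two_pos]
      linarith
    · rw [mgf_indicator_one (hA i), exp_neg, exp_log two_pos]
      linarith [add_one_le_exp (-(P.real (A i) / 2))]
  have hm : 0 ≤ m := Finset.sum_nonneg fun i _ => measureReal_nonneg
  calc P.real {ω | ∑ i, (A i).indicator 1 ω ≤ m / 2}
      ≤ exp (-(-log 2) * (m / 2)) * mgf Y P (-log 2) := by
        simpa only [hY, Finset.sum_apply] using measure_le_le_exp_mul_mgf _ ht hint
    _ ≤ exp (log 2 * (m / 2)) * exp (-(m / 2)) := by
        rw [neg_neg]; gcongr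
    _ ≤ exp (-m / 8) := by
        rw [← exp_add]
        gcongr
        nlinarith [log_two_lt_d9]

theorem measureReal_card_le_half_le_of_uniform {ι : Type*} [Fintype ι] {S : ι → Ω → ℝ}
    (hmeas : ∀ i, Measurable (S i)) (hindep : iIndepFun S P)
    (hunif : ∀ i, P.map (S i) = volume.restrict (Set.Ioo (0 : ℝ) 1))
    {p : ℝ} (hp0 : 0 ≤ p) (hp1 : p ≤ 1) :
    P.real {ω | (#{i | S i ω ≤ p} : ℝ) ≤ Fintype.card ι * p / 2} ≤
      exp (-(Fintype.card ι * p) / 8) := by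
  have hA : ∀ i, MeasurableSet (S i ⁻¹' Set.Iic p) := fun i => hmeas i measurableSet_Iic
  have hind : iIndepFun (fun i => (S i ⁻¹' Set.Iic p).indicator (1 : Ω → ℝ)) P :=
    hindep.comp (fun _ => (Set.Iic p).indicator 1)
      fun _ => measurable_one.indicator measurableSet_Iic
  have hprob : ∑ i, P.real (S i ⁻¹' Set.Iic p) = Fintype.card ι * p := by
    simp [measureReal_preimage_Iic_of_map_eq_uniform (hmeas _) (hunif _) hp0 hp1]
  have hcount : ∀ ω,
      (#{i | S i ω ≤ p} : ℝ) = ∑ i, (S i ⁻¹' Set.Iic p).indicator 1 ω := by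
    intro ω
    classical
    simp only [Set.indicator_apply, Set.mem_preimage, Set.mem_Iic, Pi.one_apply]
    rw [Finset.sum_boole]
  simpa only [hcount, hprob] using measureReal_sum_indicator_le_half_le hA hind

theorem measure_not_half_le_card_le_of_uniform {ι : Type*} [Fintype ι] {S : ι → Ω → ℝ}
    (hmeas : ∀ i, Measurable (S i)) (hindep : iIndepFun S P)
    (hunif : ∀ i, P.map (S i) = volume.restrict (Set.Ioo (0 : ℝ) 1))
    {μ : ℝ} {i r : ℕ} (hi : 1 ≤ i) (hir : i ≤ r)
    (hr : (r : ℝ) ≤ (Fintype.card ι : ℝ) ^ (1 - μ)) :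
    P {ω | ¬ (Fintype.card ι / 2 * (i / r : ℝ) ≤ #{j | S j ω ≤ i / r})} ≤
      ENNReal.ofReal (exp (-(Fintype.card ι : ℝ) ^ μ / 8)) := by
  set n := Fintype.card ι
  have hp0 : (0 : ℝ) ≤ i / r := by positivity
  have hp1 : (i / r : ℝ) ≤ 1 := div_le_one_of_le₀ (by exact_mod_cast hir) (Nat.cast_nonneg r)
  have hexp : (n : ℝ) ^ μ ≤ n * (i / r) :=
    rpow_le_mul_div_of_le_rpow (Nat.cast_nonneg n) hi (hi.trans hir) hr
  calc P {ω | ¬ (n / 2 * (i / r : ℝ) ≤ #{j | S j ω ≤ i / r})}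
      ≤ P {ω | (#{j | S j ω ≤ i / r} : ℝ) ≤ n * (i / r) / 2} :=
        measure_mono <| Set.ofPred_subset_ofPred.2 fun ω hω => by linarith
    _ ≤ ENNReal.ofReal (exp (-(n * (i / r)) / 8)) := by
        rw [← ofReal_measureReal]
        exact ENNReal.ofReal_le_ofReal
          (measureReal_card_le_half_le_of_uniform hmeas hindep hunif hp0 hp1)
    _ ≤ ENNReal.ofReal (exp (-(n : ℝ) ^ μ / 8)) := by
        gcongr

end

open scoped Classical in
theorem stmt0_general {Ω : Type*} [MeasurableSpace Ω] (P : Measure Ω) [IsProbabilityMeasure P]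
    (n : ℕ) (μ : ℝ)
    (S : Fin n → Ω → ℝ) (hmeas : ∀ i, Measurable (S i))
    (hindep : iIndepFun S P)
    (hunif : ∀ i, P.map (S i) = volume.restrict (Set.Ioo (0 : ℝ) 1)) :
    ENNReal.ofReal (1 - (n : ℝ) ^ (1 - μ) * Real.exp (-(n : ℝ) ^ μ / 8)) ≤
      P {ω | ∀ i ∈ Finset.Icc 1 (⌊(n : ℝ) ^ (1 - μ)⌋₊),
        ((n : ℝ) / 2) * ((i : ℝ) / (⌊(n : ℝ) ^ (1 - μ)⌋₊ : ℝ)) ≤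
          ((Finset.univ.filter
            (fun j : Fin n => S j ω ≤ (i : ℝ) / (⌊(n : ℝ) ^ (1 - μ)⌋₊ : ℝ))).card : ℝ)} := by
  set r := ⌊(n : ℝ) ^ (1 - μ)⌋₊
  set ε := exp (-(n : ℝ) ^ μ / 8)
  have hr : (r : ℝ) ≤ (n : ℝ) ^ (1 - μ) := Nat.floor_le (by positivity)
  have hbad : ∀ i ∈ Icc 1 r,
      P {ω | ¬ (n / 2 * (i / r : ℝ) ≤ #{j | S j ω ≤ i / r})} ≤ ENNReal.ofReal ε := by
    intro i hi
    obtain ⟨hi1, hir⟩ := Finset.mem_Icc.1 hi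
    simpa only [Fintype.card_fin] using measure_not_half_le_card_le_of_uniform hmeas hindep hunif
      hi1 hir (by rwa [Fintype.card_fin])
  calc ENNReal.ofReal (1 - n ^ (1 - μ) * ε) = 1 - ENNReal.ofReal (n ^ (1 - μ) * ε) := by
        rw [ENNReal.ofReal_sub _ (by positivity), ENNReal.ofReal_one]
    _ ≤ 1 - ∑ i ∈ Icc 1 r,
          P {ω | ¬ (n / 2 * (i / r : ℝ) ≤ #{j | S j ω ≤ i / r})} := by
        refine tsub_le_tsub_left ((Finset.sum_le_sum hbad).trans ?_) 1
        rw [Finset.sum_const, Nat.card_Icc, add_tsub_cancel_right, nsmul_eq_mul,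
          ← ENNReal.ofReal_natCast, ← ENNReal.ofReal_mul (Nat.cast_nonneg r)]
        gcongr
    _ ≤ _ := one_sub_sum_measure_le_measure_forall _ _

open scoped Classical in
/-- A collection of `n` i.i.d. Uniform(0,1) random variables is μ-regular with
probability at least `1 - n^{1-μ} exp(-n^μ/8)`. -/
theorem stmt0 {Ω : Type*} [MeasurableSpace Ω] (P : Measure Ω) [IsProbabilityMeasure P]
    (n : ℕ) (μ : ℝ) (hμ : μ ∈ Set.Ioo (0 : ℝ) (1 / 2))
    (S : Fin n → Ω → ℝ) (hmeas : ∀ i, Measurable (S i))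
    (hindep : iIndepFun S P)
    (hunif : ∀ i, P.map (S i) = volume.restrict (Set.Ioo (0 : ℝ) 1)) :
    ENNReal.ofReal (1 - (n : ℝ) ^ (1 - μ) * Real.exp (-(n : ℝ) ^ μ / 8)) ≤
      P {ω | ∀ i ∈ Finset.Icc 1 (⌊(n : ℝ) ^ (1 - μ)⌋₊),
        ((n : ℝ) / 2) * ((i : ℝ) / (⌊(n : ℝ) ^ (1 - μ)⌋₊ : ℝ)) ≤
          ((Finset.univ.filter
            (fun j : Fin n => S j ω ≤ (i : ℝ) / (⌊(n : ℝ) ^ (1 - μ)⌋₊ : ℝ))).card : ℝ)} :=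
  stmt0_general P n μ S hmeas hindep hunif
end

section
/- Let F_1, F_2 be distribution functions on [0,1] satisfying F_k(t) ≥ (1/3)(t - a_k) for all t ∈ [0,1] and k = 1,2, where a_1, a_2 ∈ (0,1/2). Let h : (0,1)² → [0,∞) be non-increasing in each argument (or more generally measurable and nonnegative with the monotonicity needed for the integration-by-parts argument). Then ∫∫ h(s,t) dF_1(s) dF_2(t) ≥ (1/9) ∫_{a_1}^{1-a_1} ∫_{a_2}^{1-a_2} h(s,t) ds dt. -/
/-!
By the layer-cake formula it suffices to compare measures of superlevel sets of an antitone
function, i.e. of lower sets `S`. If `S ∩ [0, 1]` has `F`-measure `M`, then every `y` in it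
satisfies `F y ≤ M`, so `y ≤ a + 3M` by the affine lower bound on `F`; hence `S ∩ [a, 1 - a]`
has Lebesgue measure at most `3M`. Applying this once in each variable gives the factor `9`.
-/

open MeasureTheory Set
open scoped NNReal ENNReal

namespace StieltjesFunction

variable (F : StieltjesFunction ℝ) {a b : ℝ} {c : ℝ≥0}

theorem volume_inter_Icc_le_of_isLowerSet (ha : 0 ≤ a) (hb : b ≤ 1) (hF0 : F 0 = 0)
    (hF : ∀ t ∈ Icc (0 : ℝ) 1, t - a ≤ c * F t) {S : Set ℝ} (hS : IsLowerSet S) :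
    volume (S ∩ Icc a b) ≤ c * F.measure (S ∩ Icc 0 1) := by
  set T := S ∩ Icc (0 : ℝ) 1
  have hT : F.measure T ≠ ∞ :=
    (measure_mono inter_subset_right).trans_lt isCompact_Icc.measure_lt_top |>.ne
  set M := (F.measure T).toReal
  have hle_M : ∀ y ∈ T, y - a ≤ c * M := by
    rintro y ⟨hyS, hy0, hy1⟩
    have hIoc : Ioc 0 y ⊆ T := fun z hz => ⟨hS hz.2 hyS, hz.1.le, hz.2.trans hy1⟩
    have hFy : F y ≤ M := by
      have := ENNReal.toReal_mono hT (measure_mono hIoc : F.measure (Ioc 0 y) ≤ _)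
      rwa [measure_Ioc, hF0, sub_zero, ENNReal.toReal_ofReal (hF0 ▸ F.mono hy0)] at this
    exact (hF y ⟨hy0, hy1⟩).trans (by gcongr)
  have hsup : sSup T - a ≤ c * M :=
    sub_le_iff_le_add.2 <| Real.sSup_le (fun y hy => sub_le_iff_le_add.1 (hle_M y hy))
      (by positivity)
  have hsub : S ∩ Icc a b ⊆ Icc a (sSup T) := fun y hy =>
    ⟨hy.2.1, le_csSup ⟨1, fun z hz => hz.2.2⟩ ⟨hy.1, ha.trans hy.2.1, hy.2.2.trans hb⟩⟩
  calc volume (S ∩ Icc a b) ≤ ENNReal.ofReal (sSup T - a) := by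
        simpa only [Real.volume_Icc] using measure_mono (μ := volume) hsub
    _ ≤ ENNReal.ofReal (c * M) := ENNReal.ofReal_le_ofReal hsup
    _ = c * F.measure T := by
        rw [ENNReal.ofReal_mul c.coe_nonneg, ENNReal.ofReal_toReal hT, ENNReal.ofReal_coe_nnreal]

theorem setLIntegral_Icc_le_of_antitone (ha : 0 ≤ a) (hb : b ≤ 1) (hF0 : F 0 = 0)
    (hF : ∀ t ∈ Icc (0 : ℝ) 1, t - a ≤ c * F t) {g : ℝ → ℝ} (hg : Antitone g)
    (hg0 : 0 ≤ g) :
    ∫⁻ s in Icc a b, ENNReal.ofReal (g s) ≤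
      c * ∫⁻ s in Icc 0 1, ENNReal.ofReal (g s) ∂F.measure := by
  rw [lintegral_eq_lintegral_meas_le _ (.of_forall hg0) hg.measurable.aemeasurable,
    lintegral_eq_lintegral_meas_le _ (.of_forall hg0) hg.measurable.aemeasurable,
    ← lintegral_const_mul' _ _ ENNReal.coe_ne_top]
  refine lintegral_mono fun t => ?_
  rw [Measure.restrict_apply' measurableSet_Icc, Measure.restrict_apply' measurableSet_Icc]
  exact F.volume_inter_Icc_le_of_isLowerSet ha hb hF0 hF fun u v hvu hu => hu.trans (hg hvu)

theorem setIntegral_Icc_le_of_antitone (ha : 0 ≤ a) (hb : b ≤ 1) (hF0 : F 0 = 0)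
    (hF : ∀ t ∈ Icc (0 : ℝ) 1, t - a ≤ c * F t) {g : ℝ → ℝ} (hg : Antitone g)
    (hg0 : 0 ≤ g) :
    ∫ s in Icc a b, g s ≤ c * ∫ s in Icc 0 1, g s ∂F.measure := by
  rw [integral_eq_lintegral_of_nonneg_ae (.of_forall hg0) hg.measurable.aestronglyMeasurable]
  refine ENNReal.toReal_le_of_le_ofReal
    (mul_nonneg c.coe_nonneg (setIntegral_nonneg measurableSet_Icc fun s _ => hg0 s)) ?_
  rw [ENNReal.ofReal_mul c.coe_nonneg, ENNReal.ofReal_coe_nnreal,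
    ofReal_integral_eq_lintegral_ofReal
      ((hg.antitoneOn _).integrableOn_isCompact isCompact_Icc) (.of_forall hg0)]
  exact F.setLIntegral_Icc_le_of_antitone ha hb hF0 hF hg hg0

end StieltjesFunction

theorem antitone_setIntegral_of_antitone {μ : Measure ℝ} [IsFiniteMeasureOnCompacts μ]
    {s : Set ℝ} (hs : IsCompact s) {h : ℝ → ℝ → ℝ}
    (hanti₁ : ∀ t, Antitone fun x => h x t) (hanti₂ : ∀ x, Antitone (h x)) :
    Antitone fun t => ∫ x in s, h x t ∂μ :=
  fun _ _ htt' => setIntegral_mono (((hanti₁ _).antitoneOn _).integrableOn_isCompact hs)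
    (((hanti₁ _).antitoneOn _).integrableOn_isCompact hs) fun x => hanti₂ x htt'

theorem stmt3_general (F₁ F₂ : StieltjesFunction ℝ) (a₁ a₂ : ℝ)
    (ha₁ : a₁ ∈ Set.Ioo (0 : ℝ) (1 / 2)) (ha₂ : a₂ ∈ Set.Ioo (0 : ℝ) (1 / 2))
    (h₁0 : F₁ 0 = 0) (h₂0 : F₂ 0 = 0)
    (hF₁ : ∀ t ∈ Set.Icc (0 : ℝ) 1, (1 / 3) * (t - a₁) ≤ F₁ t)
    (hF₂ : ∀ t ∈ Set.Icc (0 : ℝ) 1, (1 / 3) * (t - a₂) ≤ F₂ t)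
    (h : ℝ → ℝ → ℝ)
    (hnonneg : ∀ s t, 0 ≤ h s t)
    (hanti₁ : ∀ t, Antitone (fun s => h s t)) (hanti₂ : ∀ s, Antitone (h s)) :
    (1 / 9) * ∫ t in Set.Icc a₂ (1 - a₂), ∫ s in Set.Icc a₁ (1 - a₁), h s t ≤
      ∫ t in Set.Icc (0 : ℝ) 1, (∫ s in Set.Icc (0 : ℝ) 1, h s t ∂F₁.measure)
        ∂F₂.measure := by
  have hF₁' : ∀ t ∈ Icc (0 : ℝ) 1, t - a₁ ≤ (3 : ℝ≥0) * F₁ t := fun t ht => by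
    have := hF₁ t ht; push_cast; linarith
  have hF₂' : ∀ t ∈ Icc (0 : ℝ) 1, t - a₂ ≤ (3 : ℝ≥0) * F₂ t := fun t ht => by
    have := hF₂ t ht; push_cast; linarith
  set φ := fun t => ∫ s in Icc a₁ (1 - a₁), h s t
  set ψ := fun t => ∫ s in Icc (0 : ℝ) 1, h s t ∂F₁.measure
  have hφ : Antitone φ := antitone_setIntegral_of_antitone isCompact_Icc hanti₁ hanti₂
  have h3ψ : Antitone (3 * ψ) :=
    (antitone_setIntegral_of_antitone isCompact_Icc hanti₁ hanti₂).const_mul zero_le_three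
  have hφψ : φ ≤ 3 * ψ := fun t => by
    simpa using F₁.setIntegral_Icc_le_of_antitone ha₁.1.le (sub_le_self _ ha₁.1.le) h₁0
      hF₁' (hanti₁ t) (hnonneg · t)
  have hφ_le :
      ∫ t in Icc a₂ (1 - a₂), φ t ≤ 3 * ∫ t in Icc 0 1, φ t ∂F₂.measure := by
    exact_mod_cast F₂.setIntegral_Icc_le_of_antitone ha₂.1.le (sub_le_self _ ha₂.1.le) h₂0
      hF₂' hφ fun t => integral_nonneg (hnonneg · t)
  have hφψ_int :
      ∫ t in Icc 0 1, φ t ∂F₂.measure ≤ ∫ t in Icc 0 1, (3 * ψ) t ∂F₂.measure :=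
    setIntegral_mono ((hφ.antitoneOn _).integrableOn_isCompact isCompact_Icc)
      ((h3ψ.antitoneOn _).integrableOn_isCompact isCompact_Icc) hφψ
  simp only [Pi.mul_apply, Pi.ofNat_apply, integral_const_mul] at hφψ_int
  linarith

/-- Lower bound for a double Lebesgue–Stieltjes integral against distribution functions
dominated below by affine functions, by a Lebesgue double integral over a sub-square. -/
theorem stmt3 (F₁ F₂ : StieltjesFunction ℝ) (a₁ a₂ : ℝ)
    (ha₁ : a₁ ∈ Set.Ioo (0 : ℝ) (1 / 2)) (ha₂ : a₂ ∈ Set.Ioo (0 : ℝ) (1 / 2))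
    (h₁0 : F₁ 0 = 0) (h₁1 : F₁ 1 = 1) (h₂0 : F₂ 0 = 0) (h₂1 : F₂ 1 = 1)
    (hF₁ : ∀ t ∈ Set.Icc (0 : ℝ) 1, (1 / 3) * (t - a₁) ≤ F₁ t)
    (hF₂ : ∀ t ∈ Set.Icc (0 : ℝ) 1, (1 / 3) * (t - a₂) ≤ F₂ t)
    (h : ℝ → ℝ → ℝ) (hmeas : Measurable (Function.uncurry h))
    (hnonneg : ∀ s t, 0 ≤ h s t)
    (hanti₁ : ∀ t, Antitone (fun s => h s t)) (hanti₂ : ∀ s, Antitone (h s)) :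
    (1 / 9) * ∫ t in Set.Icc a₂ (1 - a₂), ∫ s in Set.Icc a₁ (1 - a₁), h s t ≤
      ∫ t in Set.Icc (0 : ℝ) 1, (∫ s in Set.Icc (0 : ℝ) 1, h s t ∂F₁.measure)
        ∂F₂.measure :=
  stmt3_general F₁ F₂ a₁ a₂ ha₁ ha₂ h₁0 h₂0 hF₁ hF₂ h hnonneg hanti₁ hanti₂
end

section
/- Fix d ≥ 1, ω > 2/d, λ ∈ (0,1) with ω > 2/(d(1-λ)), and let σ_n ∈ ℕ satisfy n^ω ≤ σ_n ≤ (1+n^{-2})^{1/d} n^ω for all but finitely many n. Let ϱ_n ∈ (0,1/4) with lim_n ϱ_n n² ∈ (1,∞), θ > 0, ℓ ∈ ℕ, and define v_L = (θℓ^d/2)·∏_{i=1}^L ϱ_i σ_i^d and m_L = ℓ·∏_{i=1}^L σ_i. Then there exists a constant q > 0 such that v_L ≥ q·(3m_L)^{λd} for all sufficiently large L. -/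
open Filter

/-- Final size comparison in the proof of the sublinear clusters theorem: the precluster
size threshold `v_L` exceeds a `λ`-power of the volume of the enlarged cube of side
length `3 m_L`. -/
theorem stmt11 (d : ℕ) (hd : 1 ≤ d) (ω lam : ℝ) (hlam : lam ∈ Set.Ioo (0 : ℝ) 1)
    (hω : 2 / (d : ℝ) < ω) (hω' : 2 / ((d : ℝ) * (1 - lam)) < ω)
    (σ : ℕ → ℕ)
    (hσ : ∀ᶠ n : ℕ in atTop, ((n : ℝ) ^ ω ≤ (σ n : ℝ) ∧
      (σ n : ℝ) ≤ (1 + (n : ℝ) ^ (-(2 : ℝ))) ^ (1 / (d : ℝ)) * (n : ℝ) ^ ω))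
    (ϱ : ℕ → ℝ) (hϱ : ∀ n ≥ 1, ϱ n ∈ Set.Ioo (0 : ℝ) (1 / 4))
    (c : ℝ) (hc : 1 < c) (hϱlim : Tendsto (fun n => ϱ n * (n : ℝ) ^ 2) atTop (nhds c))
    (θ : ℝ) (hθ : 0 < θ) (ℓ : ℕ) (hℓ : 1 ≤ ℓ) :
    ∃ q : ℝ, 0 < q ∧ ∀ᶠ L in atTop,
      q * ((3 * ((ℓ : ℝ) * ∏ i ∈ Finset.Icc 1 L, (σ i : ℝ))) ^ (lam * d)) ≤
        (θ * (ℓ : ℝ) ^ d / 2) * ∏ i ∈ Finset.Icc 1 L, (ϱ i * (σ i : ℝ) ^ d) := by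
  obtain ⟨hlam0, hlam1⟩ := hlam
  have hd0 : (0 : ℝ) < d := by exact_mod_cast hd
  have hlamd : 0 < lam * d := mul_pos hlam0 hd0
  have hC : (0 : ℝ) < θ * (ℓ : ℝ) ^ d / 2 := by positivity
  by_cases hzero : ∃ i ≥ 1, σ i = 0
  · obtain ⟨i₀, hi₀1, hi₀⟩ := hzero
    refine ⟨1, one_pos, ?_⟩
    filter_upwards [eventually_ge_atTop i₀] with L hL
    have hmem : i₀ ∈ Finset.Icc 1 L := Finset.mem_Icc.mpr ⟨hi₀1, hL⟩
    have h1 : ∏ i ∈ Finset.Icc 1 L, (σ i : ℝ) = 0 :=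
      Finset.prod_eq_zero hmem (by simp [hi₀])
    have h2 : ∏ i ∈ Finset.Icc 1 L, (ϱ i * (σ i : ℝ) ^ d) = 0 :=
      Finset.prod_eq_zero hmem (by simp [hi₀, zero_pow (by omega : d ≠ 0)])
    rw [h1, h2]
    simp [Real.zero_rpow hlamd.ne']
  push_neg at hzero
  -- eventual pointwise comparison
  have hev : ∀ᶠ i : ℕ in atTop,
      (σ i : ℝ) ^ (lam * d) ≤ ϱ i * (σ i : ℝ) ^ d := by
    have h3 : ∀ᶠ i : ℕ in atTop, 1 < ϱ i * (i : ℝ) ^ 2 :=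
      hϱlim.eventually (eventually_gt_nhds hc)
    filter_upwards [hσ, h3, eventually_ge_atTop 1] with i hσi h3i h1i
    have hi0 : (0 : ℝ) < i := by exact_mod_cast h1i
    have hi1 : (1 : ℝ) ≤ i := by exact_mod_cast h1i
    have hσpos : (0 : ℝ) < σ i := lt_of_lt_of_le (Real.rpow_pos_of_pos hi0 ω) hσi.1
    have hϱpos : 0 < ϱ i := (hϱ i h1i).1
    have hexp : (2 : ℝ) ≤ ω * ((1 - lam) * d) := by
      have hdl : (0 : ℝ) < (d : ℝ) * (1 - lam) := by
        have : (0:ℝ) < 1 - lam := by linarith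
        positivity
      have := (div_lt_iff₀ hdl).mp hω'
      nlinarith
    -- σ i ^ ((1-lam)*d) ≥ i ^ 2
    have key : (i : ℝ) ^ (2 : ℝ) ≤ (σ i : ℝ) ^ ((1 - lam) * d) := by
      calc (i : ℝ) ^ (2 : ℝ) ≤ (i : ℝ) ^ (ω * ((1 - lam) * d)) :=
            Real.rpow_le_rpow_of_exponent_le hi1 hexp
        _ = ((i : ℝ) ^ ω) ^ ((1 - lam) * d) := by
            exact Real.rpow_mul hi0.le _ _
        _ ≤ (σ i : ℝ) ^ ((1 - lam) * d) := by
            apply Real.rpow_le_rpow (Real.rpow_nonneg hi0.le ω) hσi.1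
            nlinarith
    have hsplit : (σ i : ℝ) ^ (d : ℕ) = (σ i : ℝ) ^ (lam * d) * (σ i : ℝ) ^ ((1 - lam) * d) := by
      rw [← Real.rpow_add hσpos, ← Real.rpow_natCast (σ i : ℝ) d]
      ring_nf
    rw [hsplit]
    have hϱi : 1 / (i : ℝ) ^ 2 ≤ ϱ i := by
      rw [div_le_iff₀ (by positivity)]
      linarith
    have hgnn : 0 ≤ (σ i : ℝ) ^ (lam * d) := Real.rpow_nonneg hσpos.le _
    have : 1 * (σ i : ℝ) ^ (lam * d) ≤ (ϱ i * (σ i : ℝ) ^ ((1 - lam) * d)) * (σ i : ℝ) ^ (lam * d) := by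
      apply mul_le_mul_of_nonneg_right _ hgnn
      have h2' : (i : ℝ) ^ (2 : ℕ) = (i : ℝ) ^ (2 : ℝ) := by
        rw [← Real.rpow_natCast]; norm_num
      calc (1 : ℝ) = (1 / (i : ℝ) ^ 2) * (i : ℝ) ^ 2 := by field_simp
        _ ≤ ϱ i * (σ i : ℝ) ^ ((1 - lam) * d) := by
            apply mul_le_mul hϱi _ (by positivity) hϱpos.le
            rw [h2']; exact key
    linarith [this]
  obtain ⟨N, hN⟩ := eventually_atTop.mp hev
  set f : ℕ → ℝ := fun i => ϱ i * (σ i : ℝ) ^ d with hf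
  set g : ℕ → ℝ := fun i => (σ i : ℝ) ^ (lam * d) with hg
  have hσ1 : ∀ i, 1 ≤ i → (1 : ℝ) ≤ σ i := by
    intro i hi
    have := hzero i hi
    exact_mod_cast Nat.one_le_iff_ne_zero.mpr this
  have hfpos : ∀ i, 1 ≤ i → 0 < f i := fun i hi =>
    mul_pos (hϱ i hi).1 (pow_pos (by linarith [hσ1 i hi]) d)
  have hgpos : ∀ i, 1 ≤ i → 0 < g i := fun i hi =>
    Real.rpow_pos_of_pos (by linarith [hσ1 i hi]) _
  have hFN : 0 < ∏ i ∈ Finset.Ioc 0 N, f i :=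
    Finset.prod_pos fun i hi => hfpos i (Finset.mem_Ioc.mp hi).1
  have hGN : 0 < ∏ i ∈ Finset.Ioc 0 N, g i :=
    Finset.prod_pos fun i hi => hgpos i (Finset.mem_Ioc.mp hi).1
  set K : ℝ := (∏ i ∈ Finset.Ioc 0 N, f i) / (∏ i ∈ Finset.Ioc 0 N, g i) with hK
  have hKpos : 0 < K := div_pos hFN hGN
  have h3ℓ : (0 : ℝ) < 3 * ℓ := by
    have : (1:ℝ) ≤ ℓ := by exact_mod_cast hℓ
    linarith
  refine ⟨(θ * (ℓ : ℝ) ^ d / 2) * K / (3 * (ℓ : ℝ)) ^ (lam * d), by positivity, ?_⟩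
  filter_upwards [eventually_ge_atTop N] with L hL
  have hIcc : Finset.Icc 1 L = Finset.Ioc 0 L := Finset.Icc_add_one_left_eq_Ioc 0 L
  rw [hIcc]
  -- rewrite LHS power
  have hPnn : ∀ i ∈ Finset.Ioc 0 L, (0 : ℝ) ≤ σ i := fun i _ => by positivity
  have hsplitpow : (3 * ((ℓ : ℝ) * ∏ i ∈ Finset.Ioc 0 L, (σ i : ℝ))) ^ (lam * d)
      = (3 * (ℓ : ℝ)) ^ (lam * d) * ∏ i ∈ Finset.Ioc 0 L, g i := by
    rw [← mul_assoc, Real.mul_rpow (by positivity) (Finset.prod_nonneg hPnn),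
      ← Real.finset_prod_rpow _ _ hPnn]
  rw [hsplitpow]
  have hprodsplit : ∀ (h : ℕ → ℝ), (∏ i ∈ Finset.Ioc 0 N, h i) * ∏ i ∈ Finset.Ioc N L, h i
      = ∏ i ∈ Finset.Ioc 0 L, h i := fun h =>
    Finset.prod_Ioc_consecutive h (Nat.zero_le N) hL
  have hkey : K * ∏ i ∈ Finset.Ioc 0 L, g i ≤ ∏ i ∈ Finset.Ioc 0 L, f i := by
    rw [← hprodsplit g, ← hprodsplit f, ← mul_assoc]
    have hKG : K * ∏ i ∈ Finset.Ioc 0 N, g i = ∏ i ∈ Finset.Ioc 0 N, f i := by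
      rw [hK, div_mul_cancel₀ _ hGN.ne']
    rw [hKG]
    apply mul_le_mul_of_nonneg_left _ hFN.le
    apply Finset.prod_le_prod
    · intro i hi
      have h1 := (Finset.mem_Ioc.mp hi).1
      exact (hgpos i (by omega)).le
    · intro i hi
      exact hN i (le_of_lt (Finset.mem_Ioc.mp hi).1)
  calc (θ * (ℓ : ℝ) ^ d / 2) * K / (3 * (ℓ : ℝ)) ^ (lam * d) *
        ((3 * (ℓ : ℝ)) ^ (lam * d) * ∏ i ∈ Finset.Ioc 0 L, g i)
      = (θ * (ℓ : ℝ) ^ d / 2) * (K * ∏ i ∈ Finset.Ioc 0 L, g i) := by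
        field_simp
    _ ≤ (θ * (ℓ : ℝ) ^ d / 2) * ∏ i ∈ Finset.Ioc 0 L, f i :=
        mul_le_mul_of_nonneg_left hkey hC.le
end

section
/- Let ν > 1 and write ν = 1 + ε with ε > 0. Let d ≥ 1, ω > 2ν/(d(ν-1)), let σ_n ∈ ℕ satisfy n^ω ≤ σ_n ≤ (1+n^{-2})^{1/d} n^ω for all but finitely many n, let ϱ_n ∈ (0,1/4) with lim ϱ_n n² ∈ (1,∞), let θ ∈ (0,1], m_0 ∈ ℕ, and define v_{n-1} = (θ m_0^d/2)·∏_{i=1}^{n-1} ϱ_i σ_i^d and m_n = m_0·∏_{i=1}^n σ_i. Then (√d · m_n)^d ≤ v_{n-1}^ν for all sufficiently large n. -/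
open Filter

set_option maxHeartbeats 1000000 in
/-- Inequality (auxbound3): the diameter bound `√d · m_n` of a stage-`n` cube is
eventually dominated by the `ν/d` power of the stage-`(n-1)` precluster size threshold,
i.e. `(√d · m_n)^d ≤ v_{n-1}^ν`. -/
theorem stmt12 (ν : ℝ) (hν : 1 < ν) (ε : ℝ) (hε : 0 < ε) (hνε : ν = 1 + ε)
    (d : ℕ) (hd : 1 ≤ d) (ω : ℝ) (hω : 2 * ν / ((d : ℝ) * (ν - 1)) < ω)
    (σ : ℕ → ℕ)
    (hσ : ∀ᶠ n : ℕ in atTop, ((n : ℝ) ^ ω ≤ (σ n : ℝ) ∧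
      (σ n : ℝ) ≤ (1 + (n : ℝ) ^ (-(2 : ℝ))) ^ (1 / (d : ℝ)) * (n : ℝ) ^ ω))
    (ϱ : ℕ → ℝ) (hϱ : ∀ n ≥ 1, ϱ n ∈ Set.Ioo (0 : ℝ) (1 / 4))
    (c : ℝ) (hc : 1 < c) (hϱlim : Tendsto (fun n => ϱ n * (n : ℝ) ^ 2) atTop (nhds c))
    (θ : ℝ) (hθ : θ ∈ Set.Ioc (0 : ℝ) 1) (m₀ : ℕ) (hm₀ : 1 ≤ m₀) :
    ∀ᶠ n : ℕ in atTop,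
      (Real.sqrt d * ((m₀ : ℝ) * ∏ i ∈ Finset.Icc 1 n, (σ i : ℝ))) ^ (d : ℕ) ≤
        ((θ * (m₀ : ℝ) ^ d / 2) * ∏ i ∈ Finset.Icc 1 (n - 1), (ϱ i * (σ i : ℝ) ^ d)) ^ ν := by
  obtain ⟨hθ0, hθ1⟩ := hθ
  have hd0 : (0 : ℝ) < d := by exact_mod_cast hd
  have hν0 : (0 : ℝ) < ν := by linarith
  have hm₀0 : (0 : ℝ) < m₀ := by exact_mod_cast hm₀
  have hω0 : 0 < ω := lt_trans (div_pos (by linarith) (by nlinarith)) hω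
  -- the key exponent gap
  have hδ : 0 < ε * (d : ℝ) * ω - 2 * ν := by
    rw [div_lt_iff₀ (by nlinarith : (0 : ℝ) < (d : ℝ) * (ν - 1))] at hω
    nlinarith
  by_cases hzero : ∃ k, 1 ≤ k ∧ σ k = 0
  · -- degenerate case: both sides are eventually 0
    obtain ⟨k, hk1, hk0⟩ := hzero
    filter_upwards [eventually_ge_atTop (k + 1)] with n hn
    have h1 : ∏ i ∈ Finset.Icc 1 n, (σ i : ℝ) = 0 :=
      Finset.prod_eq_zero (Finset.mem_Icc.mpr ⟨hk1, by omega⟩) (by simp [hk0])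
    have h2 : ∏ i ∈ Finset.Icc 1 (n - 1), (ϱ i * (σ i : ℝ) ^ d) = 0 :=
      Finset.prod_eq_zero (i := k) (Finset.mem_Icc.mpr ⟨hk1, by omega⟩)
        (by simp [hk0, zero_pow (by omega : d ≠ 0)])
    rw [h1, h2]
    simp [Real.zero_rpow hν0.ne', zero_pow (show d ≠ 0 by omega)]
  · push_neg at hzero
    have hσ1 : ∀ k, 1 ≤ k → 1 ≤ σ k := fun k hk => Nat.one_le_iff_ne_zero.mpr (hzero k hk)
    obtain ⟨N₁, hN₁⟩ := eventually_atTop.mp hσ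
    obtain ⟨N₂, hN₂⟩ := eventually_atTop.mp (hϱlim.eventually_const_lt hc)
    set N : ℕ := max (max N₁ N₂) 2 with hN
    set M : ℕ := N - 1 with hMdef
    have hN2 : 2 ≤ N := le_max_right _ _
    have hMN : N = M + 1 := by omega
    -- pointwise bounds for large indices
    have hipos : ∀ i : ℕ, N ≤ i → (0 : ℝ) < i := fun i hi => by
      have : 2 ≤ i := le_trans hN2 hi; positivity
    have hσpos : ∀ i : ℕ, 1 ≤ i → (0 : ℝ) < σ i := fun i hi => by
      exact_mod_cast hσ1 i hi
    have hlogσ_lb : ∀ i : ℕ, N ≤ i → ω * Real.log i ≤ Real.log (σ i) := by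
      intro i hi
      have hi0 := hipos i hi
      have h1 := (hN₁ i (le_trans (le_trans (le_max_left _ _) (le_max_left _ _)) hi)).1
      calc ω * Real.log i = Real.log ((i : ℝ) ^ ω) := (Real.log_rpow hi0 ω).symm
        _ ≤ Real.log (σ i) :=
          (Real.log_le_log_iff (by positivity) (hσpos i (by omega))).mpr h1
    have hlogσ_ub : ∀ i : ℕ, N ≤ i → Real.log (σ i) ≤ 1 + ω * Real.log i := by
      intro i hi
      have hi0 := hipos i hi
      have h2 := (hN₁ i (le_trans (le_trans (le_max_left _ _) (le_max_left _ _)) hi)).2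
      have hfac : (1 + (i : ℝ) ^ (-(2 : ℝ))) ^ (1 / (d : ℝ)) ≤ 2 := by
        have hb : (1 + (i : ℝ) ^ (-(2 : ℝ))) ≤ 2 := by
          have : (i : ℝ) ^ (-(2 : ℝ)) ≤ 1 :=
            Real.rpow_le_one_of_one_le_of_nonpos
              (by exact_mod_cast le_trans hN2 hi |>.trans' (by norm_num)) (by norm_num)
          linarith
        calc (1 + (i : ℝ) ^ (-(2 : ℝ))) ^ (1 / (d : ℝ)) ≤ (2 : ℝ) ^ (1 / (d : ℝ)) :=
              Real.rpow_le_rpow (by positivity) hb (by positivity)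
          _ ≤ (2 : ℝ) ^ (1 : ℝ) :=
              Real.rpow_le_rpow_of_exponent_le (by norm_num)
                (by rw [div_le_one hd0]; exact_mod_cast hd)
          _ = 2 := Real.rpow_one 2
      have hub : (σ i : ℝ) ≤ 2 * (i : ℝ) ^ ω :=
        le_trans h2 (mul_le_mul_of_nonneg_right hfac (by positivity))
      have hlog2 : Real.log 2 ≤ 1 := by
        have := Real.log_two_lt_d9; linarith
      calc Real.log (σ i) ≤ Real.log (2 * (i : ℝ) ^ ω) :=
            (Real.log_le_log_iff (hσpos i (by omega)) (by positivity)).mpr hub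
        _ = Real.log 2 + ω * Real.log i := by
            rw [Real.log_mul (by norm_num) (by positivity), Real.log_rpow hi0]
        _ ≤ 1 + ω * Real.log i := by linarith
    have hlogϱ_lb : ∀ i : ℕ, N ≤ i → -(2 * Real.log i) ≤ Real.log (ϱ i) := by
      intro i hi
      have hi0 := hipos i hi
      have h2 := hN₂ i (le_trans (le_trans (le_max_right _ _) (le_max_left _ _)) hi)
      have hϱi := hϱ i (by omega)
      have hsq : (0 : ℝ) < (i : ℝ) ^ 2 := by positivity
      have hge : 1 / (i : ℝ) ^ 2 ≤ ϱ i := by rw [div_le_iff₀ hsq]; linarith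
      calc -(2 * Real.log i) = Real.log (1 / (i : ℝ) ^ 2) := by
            rw [one_div, Real.log_inv, Real.log_pow]; push_cast; ring
        _ ≤ Real.log (ϱ i) :=
          (Real.log_le_log_iff (by positivity) hϱi.1).mpr hge
    have hlogi_nonneg : ∀ i : ℕ, 0 ≤ Real.log i := Real.log_natCast_nonneg
    -- constants
    set C1 : ℝ := ∑ i ∈ Finset.Ioc 0 M, -Real.log (ϱ i) with hC1
    set A : ℝ := ν * Real.log (θ * (m₀ : ℝ) ^ d / 2)
        - (d : ℝ) * Real.log (Real.sqrt d * (m₀ : ℝ)) with hA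
    set b : ℝ := (ε * (d : ℝ) * ω - 2 * ν) * Real.log 2 with hb
    have hb0 : 0 < b := mul_pos hδ (Real.log_pos (by norm_num))
    -- the dominating function tends to -∞
    have hIoc : ∀ k : ℕ, Finset.Icc 1 k = Finset.Ioc 0 k := by
      intro k; ext x; simp [Finset.mem_Icc, Finset.mem_Ioc]; omega
    have htend : Tendsto (fun n : ℕ => ((d : ℝ) + ν * C1 + b * (1 + M))
        + ((d : ℝ) * ω * Real.log n - b * n)) atTop atBot := by
      apply tendsto_atBot_add_const_left _ _
      have hreal : Tendsto (fun x : ℝ => (d : ℝ) * ω * Real.log x - b * x) atTop atBot := by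
        have h0 : Tendsto (fun x : ℝ => (d : ℝ) * ω * (Real.log x / x)) atTop (nhds 0) := by
          have := (Real.tendsto_pow_log_div_mul_add_atTop 1 0 1 one_ne_zero).const_mul
            ((d : ℝ) * ω)
          simpa using this
        have hev : ∀ᶠ x : ℝ in atTop,
            (d : ℝ) * ω * Real.log x - b * x ≤ -(b / 2) * x := by
          filter_upwards [h0.eventually_le_const (by positivity : (0:ℝ) < b / 2),
            eventually_ge_atTop (1 : ℝ)] with x hx hx1
          have hx0 : (0 : ℝ) < x := lt_of_lt_of_le one_pos hx1
          have : (d : ℝ) * ω * Real.log x ≤ b / 2 * x := by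
            calc (d : ℝ) * ω * Real.log x = ((d : ℝ) * ω * (Real.log x / x)) * x := by
                  field_simp
              _ ≤ b / 2 * x := mul_le_mul_of_nonneg_right hx hx0.le
          linarith
        exact tendsto_atBot_mono' atTop hev
          (tendsto_const_nhds.neg_mul_atTop (by linarith : -(b / 2) < 0) tendsto_id)
      exact hreal.comp tendsto_natCast_atTop_atTop
    -- key eventual estimate
    have hkey : ∀ᶠ n : ℕ in atTop, (d : ℝ) * Real.log (σ n) ≤
        A + ε * ((d : ℝ) * ∑ i ∈ Finset.Icc 1 (n - 1), Real.log (σ i))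
          + ν * ∑ i ∈ Finset.Icc 1 (n - 1), Real.log (ϱ i) := by
      filter_upwards [tendsto_atBot.mp htend A, eventually_ge_atTop (N + 1)] with n hhn hn
      have hM_le : M ≤ n - 1 := by omega
      set S : ℝ := ∑ i ∈ Finset.Icc 1 (n - 1), Real.log (σ i) with hS
      set R : ℝ := ∑ i ∈ Finset.Icc 1 (n - 1), Real.log (ϱ i) with hR
      set T : ℝ := ∑ i ∈ Finset.Ioc M (n - 1), Real.log i with hT
      have hmem : ∀ i ∈ Finset.Ioc M (n - 1), N ≤ i := by
        intro i hi; have := (Finset.mem_Ioc.mp hi).1; omega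
      have hSlb : ω * T ≤ S := by
        calc ω * T = ∑ i ∈ Finset.Ioc M (n - 1), ω * Real.log i := by
              rw [Finset.mul_sum]
          _ ≤ ∑ i ∈ Finset.Ioc M (n - 1), Real.log (σ i) :=
              Finset.sum_le_sum fun i hi => hlogσ_lb i (hmem i hi)
          _ ≤ S := by
              rw [hS, hIoc]
              exact Finset.sum_le_sum_of_subset_of_nonneg
                (Finset.Ioc_subset_Ioc_left (Nat.zero_le M))
                (fun i _ _ => hlogi_nonneg (σ i))
      have hRub : -R ≤ C1 + 2 * T := by
        have hsplit : (∑ i ∈ Finset.Ioc 0 M, Real.log (ϱ i))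
            + ∑ i ∈ Finset.Ioc M (n - 1), Real.log (ϱ i)
            = ∑ i ∈ Finset.Ioc 0 (n - 1), Real.log (ϱ i) :=
          Finset.sum_Ioc_consecutive _ (Nat.zero_le M) hM_le
        have htail : -∑ i ∈ Finset.Ioc M (n - 1), Real.log (ϱ i) ≤ 2 * T := by
          rw [← Finset.sum_neg_distrib, Finset.mul_sum]
          exact Finset.sum_le_sum fun i hi => by
            have := hlogϱ_lb i (hmem i hi); linarith
        have hCeq : -∑ i ∈ Finset.Ioc 0 M, Real.log (ϱ i) = C1 := by
          rw [hC1, Finset.sum_neg_distrib]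
        rw [hR, hIoc, ← hsplit]
        linarith
      have hTlb : ((n : ℝ) - 1 - M) * Real.log 2 ≤ T := by
        have hcard : ((Finset.Ioc M (n - 1)).card : ℝ) = (n : ℝ) - 1 - M := by
          rw [Nat.card_Ioc, Nat.cast_sub hM_le, Nat.cast_sub (by omega : 1 ≤ n)]
          norm_num
        calc ((n : ℝ) - 1 - M) * Real.log 2
            = (Finset.Ioc M (n - 1)).card • Real.log 2 := by
              rw [nsmul_eq_mul, hcard]
          _ ≤ T := Finset.card_nsmul_le_sum _ _ _ fun i hi => by
              have hi2 : 2 ≤ i := le_trans hN2 (hmem i hi)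
              exact Real.log_le_log (by norm_num) (by exact_mod_cast hi2)
      have hσd : (d : ℝ) * Real.log (σ n) ≤ (d : ℝ) * (1 + ω * Real.log n) :=
        mul_le_mul_of_nonneg_left (hlogσ_ub n (by omega)) hd0.le
      have hS2 : ε * ((d : ℝ) * (ω * T)) ≤ ε * ((d : ℝ) * S) :=
        mul_le_mul_of_nonneg_left (mul_le_mul_of_nonneg_left hSlb hd0.le) hε.le
      have hR2 : ν * (-(C1 + 2 * T)) ≤ ν * R := by
        apply mul_le_mul_of_nonneg_left _ hν0.le; linarith
      have hT2 : (ε * (d : ℝ) * ω - 2 * ν) * (((n : ℝ) - 1 - M) * Real.log 2)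
          ≤ (ε * (d : ℝ) * ω - 2 * ν) * T :=
        mul_le_mul_of_nonneg_left hTlb hδ.le
      rw [hb] at hhn
      linarith [hhn, hσd, hS2, hR2, hT2]
    -- conclude
    filter_upwards [hkey, eventually_ge_atTop 1] with n hg hn1
    have hP : (0 : ℝ) < ∏ i ∈ Finset.Icc 1 n, (σ i : ℝ) :=
      Finset.prod_pos fun i hi => hσpos i (Finset.mem_Icc.mp hi).1
    have hQ : (0 : ℝ) < ∏ i ∈ Finset.Icc 1 (n - 1), (ϱ i * (σ i : ℝ) ^ d) :=
      Finset.prod_pos fun i hi => mul_pos ((hϱ i (Finset.mem_Icc.mp hi).1).1)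
        (pow_pos (hσpos i (Finset.mem_Icc.mp hi).1) d)
    have hsd : (0 : ℝ) < Real.sqrt d := Real.sqrt_pos.mpr hd0
    have hLpos : (0 : ℝ) < Real.sqrt d * ((m₀ : ℝ) * ∏ i ∈ Finset.Icc 1 n, (σ i : ℝ)) := by
      positivity
    have hBpos : (0 : ℝ) < (θ * (m₀ : ℝ) ^ d / 2)
        * ∏ i ∈ Finset.Icc 1 (n - 1), (ϱ i * (σ i : ℝ) ^ d) := by positivity
    apply (Real.log_le_log_iff (pow_pos hLpos d) (Real.rpow_pos_of_pos hBpos ν)).mp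
    rw [Real.log_pow, Real.log_rpow hBpos]
    have e1 : Real.sqrt d * ((m₀ : ℝ) * ∏ i ∈ Finset.Icc 1 n, (σ i : ℝ))
        = (Real.sqrt d * (m₀ : ℝ)) * ∏ i ∈ Finset.Icc 1 n, (σ i : ℝ) := by ring
    rw [e1, Real.log_mul (by positivity) hP.ne',
      Real.log_prod (fun i hi => (hσpos i (Finset.mem_Icc.mp hi).1).ne'),
      Real.log_mul (by positivity) hQ.ne',
      Real.log_prod (fun i hi => (mul_pos ((hϱ i (Finset.mem_Icc.mp hi).1).1)
        (pow_pos (hσpos i (Finset.mem_Icc.mp hi).1) d)).ne')]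
    have e2 : ∑ i ∈ Finset.Icc 1 (n - 1), Real.log (ϱ i * (σ i : ℝ) ^ d)
        = (∑ i ∈ Finset.Icc 1 (n - 1), Real.log (ϱ i))
          + (d : ℝ) * ∑ i ∈ Finset.Icc 1 (n - 1), Real.log (σ i) := by
      rw [Finset.mul_sum, ← Finset.sum_add_distrib]
      exact Finset.sum_congr rfl fun i hi => by
        rw [Real.log_mul ((hϱ i (Finset.mem_Icc.mp hi).1).1).ne'
          (pow_pos (hσpos i (Finset.mem_Icc.mp hi).1) d).ne', Real.log_pow]
    have hn' : n - 1 + 1 = n := by omega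
    have e3 : ∑ i ∈ Finset.Icc 1 n, Real.log (σ i : ℝ)
        = (∑ i ∈ Finset.Icc 1 (n - 1), Real.log (σ i : ℝ)) + Real.log (σ n : ℝ) := by
      conv_lhs => rw [← hn']
      rw [Finset.sum_Icc_succ_top (by omega : 1 ≤ n - 1 + 1), hn']
    rw [e2, e3]
    have hX : ν * ((d : ℝ) * ∑ i ∈ Finset.Icc 1 (n - 1), Real.log (σ i : ℝ))
        = (d : ℝ) * ∑ i ∈ Finset.Icc 1 (n - 1), Real.log (σ i : ℝ)
          + ε * ((d : ℝ) * ∑ i ∈ Finset.Icc 1 (n - 1), Real.log (σ i : ℝ)) := by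
      rw [hνε]; ring
    rw [hA] at hg
    linarith [hg, hX]
end
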